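/- Γ̃(R) = Z*(Γ(R)) if and only if Γ̃(T(R)) = Z*(Γ(T(R))). -/

import Mathlib

/-!
`Γ̃(R) = Z*(Γ(R))` says exactly that whenever distinct nonzero `x, y` satisfy `x * y = 0`, the sum `x + y`
is a zero-divisor (such `x, y` are automatically zero-divisors). This property passes between
`R` and a localization `S` of `R` at non-zero-divisors: going down, `R` embeds in `S` and
zero-divisors of `R` stay zero-divisors in `S`; going up, a pair in `S` is moved into `R` by
a common denominator, which is a unit of `S` and so changes neither products being zero nor
sums being zero-divisors.
-/

/-- x is a zero-divisor (including 0 in a nontrivial ring). -/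
def IsZD {R : Type} [CommRing R] (x : R) : Prop := ∃ y : R, y ≠ 0 ∧ x * y = 0

/-- Adjacency relation of the graph Γ̃(R): xy = 0 or x + y ∈ Z(R). -/
def GTAdj {R : Type} [CommRing R] (x y : R) : Prop := x * y = 0 ∨ IsZD (x + y)

/-- Γ̃(R) is a complete graph: any two distinct nonzero zero-divisors are adjacent. -/
def GTComplete (R : Type) [CommRing R] : Prop :=
  ∀ x y : R, IsZD x → x ≠ 0 → IsZD y → y ≠ 0 → x ≠ y → GTAdj x y

/-- Γ̃(R) = Γ(R): distinct nonzero zero-divisors are adjacent in Γ̃(R) iff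
they are adjacent in the zero-divisor graph Γ(R). -/
def TildeEqGamma (R : Type) [CommRing R] : Prop :=
  ∀ x y : R, IsZD x → x ≠ 0 → IsZD y → y ≠ 0 → x ≠ y →
    ((x * y = 0 ∨ IsZD (x + y)) ↔ x * y = 0)

/-- Γ̃(R) = Z*(Γ(R)): distinct nonzero zero-divisors are adjacent in Γ̃(R) iff
they are adjacent in the total graph restricted to Z(R)*. -/
def TildeEqZStar (R : Type) [CommRing R] : Prop :=
  ∀ x y : R, IsZD x → x ≠ 0 → IsZD y → y ≠ 0 → x ≠ y →
    ((x * y = 0 ∨ IsZD (x + y)) ↔ IsZD (x + y))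

open nonZeroDivisors

def SumIsZDOfMulEqZero (R : Type) [CommRing R] : Prop :=
  ∀ x y : R, x ≠ 0 → y ≠ 0 → x ≠ y → x * y = 0 → IsZD (x + y)

theorem tildeEqZStar_iff_sumIsZDOfMulEqZero (R : Type) [CommRing R] :
    TildeEqZStar R ↔ SumIsZDOfMulEqZero R := by
  constructor
  · intro h x y hx hy hxy hmul
    exact (h x y ⟨y, hy, hmul⟩ hx ⟨x, hx, by rw [mul_comm, hmul]⟩ hy hxy).mp (Or.inl hmul)
  · intro h x y _ hx _ hy hxy
    exact ⟨fun hadj => hadj.elim (h x y hx hy hxy) id, Or.inr⟩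

section

variable {R : Type} [CommRing R]

theorem isZD_iff_notMem_nonZeroDivisors {x : R} : IsZD x ↔ x ∉ R⁰ := by
  simp only [notMem_nonZeroDivisors_iff_left, Set.nonempty_def, Set.mem_ofPred_eq, IsZD, and_comm]

theorem isZD_mul_right_iff {x s : R} (hs : s ∈ R⁰) : IsZD (x * s) ↔ IsZD x := by
  simp only [isZD_iff_notMem_nonZeroDivisors, mul_mem_nonZeroDivisors, hs, and_true]

variable {M : Submonoid R} {S : Type} [CommRing S] [Algebra R S] [IsLocalization M S]

theorem isZD_algebraMap_iff (hM : M ≤ R⁰) {r : R} : IsZD (algebraMap R S r) ↔ IsZD r := by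
  refine ⟨fun h => ?_, fun ⟨y, hy, hry⟩ => ?_⟩
  · rw [isZD_iff_notMem_nonZeroDivisors] at h ⊢
    exact fun hr => h (IsLocalization.nonZeroDivisors_le_comap M S hr)
  · refine ⟨algebraMap R S y, ?_, by rw [← map_mul, hry, map_zero]⟩
    exact (map_ne_zero_iff _ (IsLocalization.injective S hM)).mpr hy

theorem SumIsZDOfMulEqZero.of_isLocalization (hM : M ≤ R⁰) (h : SumIsZDOfMulEqZero S) :
    SumIsZDOfMulEqZero R := by
  have hinj := IsLocalization.injective S hM
  intro x y hx hy hxy hmul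
  rw [← isZD_algebraMap_iff (S := S) hM, map_add]
  refine h _ _ ((map_ne_zero_iff _ hinj).mpr hx) ((map_ne_zero_iff _ hinj).mpr hy)
    (hinj.ne hxy) ?_
  rw [← map_mul, hmul, map_zero]

theorem SumIsZDOfMulEqZero.isLocalization (hM : M ≤ R⁰) (h : SumIsZDOfMulEqZero R) :
    SumIsZDOfMulEqZero S := by
  have hinj := IsLocalization.injective S hM
  intro X Y hX hY hXY hmul
  obtain ⟨a, b, d, ha, hb⟩ := IsLocalization.surj₂ M S X Y
  set u := algebraMap R S d
  have hu : IsUnit u := IsLocalization.map_units S d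
  have ha0 : a ≠ 0 := by
    rintro rfl
    exact hX (hu.mul_left_eq_zero.mp (by rw [ha, map_zero]))
  have hb0 : b ≠ 0 := by
    rintro rfl
    exact hY (hu.mul_left_eq_zero.mp (by rw [hb, map_zero]))
  have hab : a ≠ b := by
    rintro rfl
    exact hXY (hu.mul_right_cancel (ha.trans hb.symm))
  have hmul' : a * b = 0 := by
    apply hinj
    rw [map_mul, ← ha, ← hb, map_zero, mul_mul_mul_comm, hmul, zero_mul]
  have hsum : IsZD (algebraMap R S (a + b)) := (isZD_algebraMap_iff hM).mpr (h a b ha0 hb0 hab hmul')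
  rwa [map_add, ← ha, ← hb, ← add_mul, isZD_mul_right_iff hu.mem_nonZeroDivisors] at hsum

theorem sumIsZDOfMulEqZero_isLocalization_iff (hM : M ≤ R⁰) :
    SumIsZDOfMulEqZero S ↔ SumIsZDOfMulEqZero R :=
  ⟨.of_isLocalization hM, .isLocalization hM⟩

end

theorem stmt12_general (R : Type) [CommRing R] :
    TildeEqZStar R ↔ TildeEqZStar (FractionRing R) := by
  rw [tildeEqZStar_iff_sumIsZDOfMulEqZero, tildeEqZStar_iff_sumIsZDOfMulEqZero]
  exact (sumIsZDOfMulEqZero_isLocalization_iff le_rfl).symm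

theorem stmt12 (R : Type) [CommRing R] [Nontrivial R] :
    TildeEqZStar R ↔ TildeEqZStar (FractionRing R) :=
  stmt12_general R
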